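/- For q ∈ ℂ with 0 < |q| < 1, α ∈ ℕ with α ≥ 1, and n ∈ ℕ with n ≥ 1: (1-q)/(1-q^α)^n ∑_{l=0}^n C(n,l)(-1)^l · αl/(1-q^{αl+1}) = -nα(1-q)/(1-q^α)^n ∑_{m=0}^∞ q^{mα+m}(1-q^{mα})^{n-1}, i.e., the Pascal-type identity l·C(n,l) = n·C(n-1,l-1) combined with geometric series summation yields this rearrangement. -/

import Mathlib

noncomputable def qnum (q : ℂ) (x : ℕ) : ℂ := (1 - q ^ x) / (1 - q)

noncomputable def qB (q : ℂ) (a n : ℕ) : ℂ :=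
  (1 - q) / (1 - q ^ a) ^ n *
    ∑ l ∈ Finset.range (n + 1),
      (n.choose l : ℂ) * (-1) ^ l * ((a : ℂ) * l + 1) / (1 - q ^ (a * l + 1))

noncomputable def qBpoly (q : ℂ) (a n x : ℕ) : ℂ :=
  (1 - q) / (1 - q ^ a) ^ n *
    ∑ l ∈ Finset.range (n + 1),
      (n.choose l : ℂ) * (-1) ^ l * q ^ (a * l * x) * ((a : ℂ) * l + 1) / (1 - q ^ (a * l + 1))

/-! Expanding each `1 / (1 - q ^ (a l + 1))` as a geometric series and exchanging the finite sum
with the series, the coefficient of the `m`-th term is `a q^m ∑ₗ C(n,l) (-1)^l l (q^(a m))^l`.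
By `l C(n,l) = n C(n-1,l-1)` this inner sum collapses to `-n x (1 - x)^(n-1)` at `x = q^(a m)`. -/

open Finset

theorem sum_range_choose_mul_neg_one_pow_mul_pow {R : Type*} [CommRing R] (n : ℕ) (x : R) :
    ∑ l ∈ range (n + 1), (n.choose l : R) * (-1) ^ l * l * x ^ l = -n * x * (1 - x) ^ (n - 1) := by
  cases n with
  | zero => simp
  | succ m =>
    have hpascal : ∀ i, ((m + 1).choose (i + 1) : R) * (i + 1) = (m + 1) * m.choose i := fun i => by
      exact_mod_cast congrArg (Nat.cast : ℕ → R) (Nat.add_one_mul_choose_eq m i).symm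
    rw [sum_range_succ', Nat.add_sub_cancel, sub_eq_add_neg, add_comm 1 (-x), add_pow, mul_sum]
    simp only [one_pow, mul_one, Nat.cast_zero, mul_zero, zero_mul, add_zero]
    refine sum_congr rfl fun i _ => ?_
    push_cast
    linear_combination (-1 : R) ^ (i + 1) * x ^ (i + 1) * hpascal i

theorem Finset.sum_div_one_sub_eq_tsum_sum {ι K : Type*} [NormedField K] [CompleteSpace K]
    (s : Finset ι) (f r : ι → K) (hr : ∀ i ∈ s, ‖r i‖ < 1) :
    ∑ i ∈ s, f i / (1 - r i) = ∑' m : ℕ, ∑ i ∈ s, f i * r i ^ m := by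
  rw [Summable.tsum_finsetSum fun i hi =>
    (summable_geometric_of_norm_lt_one (hr i hi)).mul_left (f i)]
  refine sum_congr rfl fun i hi => ?_
  rw [tsum_mul_left, tsum_geometric_of_norm_lt_one (hr i hi), div_eq_mul_inv]

theorem stmt15_general (q : ℂ) (hq1 : ‖q‖ < 1)
    (a n : ℕ) :
    (1 - q) / (1 - q ^ a) ^ n *
        ∑ l ∈ Finset.range (n + 1),
          (n.choose l : ℂ) * (-1) ^ l * ((a : ℂ) * l) / (1 - q ^ (a * l + 1)) =
      -(n : ℂ) * a * (1 - q) / (1 - q ^ a) ^ n *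
        ∑' m : ℕ, q ^ (m * a + m) * (1 - q ^ (m * a)) ^ (n - 1) := by
  have hgeom : ∀ l ∈ range (n + 1), ‖q ^ (a * l + 1)‖ < 1 := fun l _ => by
    rw [norm_pow]
    exact pow_lt_one₀ (norm_nonneg q) hq1 (Nat.succ_ne_zero _)
  have hcoeff : ∀ m : ℕ,
      ∑ l ∈ range (n + 1), (n.choose l : ℂ) * (-1) ^ l * ((a : ℂ) * l) * (q ^ (a * l + 1)) ^ m
        = -n * a * (q ^ (m * a + m) * (1 - q ^ (m * a)) ^ (n - 1)) := fun m => by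
    have hterm : ∀ l ∈ range (n + 1),
        (n.choose l : ℂ) * (-1) ^ l * ((a : ℂ) * l) * (q ^ (a * l + 1)) ^ m
          = a * q ^ m * ((n.choose l : ℂ) * (-1) ^ l * l * (q ^ (m * a)) ^ l) := fun l _ => by
      rw [← pow_mul, ← pow_mul, show (a * l + 1) * m = m * a * l + m by ring, pow_add]
      ring
    rw [sum_congr rfl hterm, ← mul_sum, sum_range_choose_mul_neg_one_pow_mul_pow, pow_add]
    ring
  simp_rw [sum_div_one_sub_eq_tsum_sum _ _ _ hgeom, hcoeff, tsum_mul_left]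
  ring

theorem stmt15 (q : ℂ) (hq0 : 0 < ‖q‖) (hq1 : ‖q‖ < 1)
    (a n : ℕ) (ha : 1 ≤ a) (hn : 1 ≤ n) :
    (1 - q) / (1 - q ^ a) ^ n *
        ∑ l ∈ Finset.range (n + 1),
          (n.choose l : ℂ) * (-1) ^ l * ((a : ℂ) * l) / (1 - q ^ (a * l + 1)) =
      -(n : ℂ) * a * (1 - q) / (1 - q ^ a) ^ n *
        ∑' m : ℕ, q ^ (m * a + m) * (1 - q ^ (m * a)) ^ (n - 1) :=
  stmt15_general q hq1 a n
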